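/- arXiv:2203.08317 — 3 statements merged into one kernel-verified Lean document; each statement's English description precedes it below -/
import Mathlib

section
/- Let K : ℝ → ℝ be a bounded, measurable, integrable and square-integrable kernel, and suppose each density p_i is square-integrable, each convolution K_{σ_i} * p_i is square-integrable, and each difference b_i = p_i − p_T is square-integrable. Then the mean integrated squared error of the sliding-window kernel density estimator satisfies the finite-sample bound ∫_ℝ E[(ĥ(x) − p_T(x))²] dx ≤ Σ_{i=1}^T α_i²·R(K)/(n_i·σ_i) + (2T−1)·Σ_{i=1}^T α_i²·R(b_i) + (2T−1)·Σ_{i=1}^T α_i²·R(K_{σ_i} * p_i − p_i). (Note b_T = 0, so the second sum effectively runs over i = 1, …, T−1; this is the non-asymptotic inequality underlying the paper's AMISE upper bound of Theorem 1.) -/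
open MeasureTheory ProbabilityTheory Filter Real

/-- The rescaled kernel `K_σ(x) = (1/σ)·K(x/σ)`. -/
noncomputable def scaledKernel (K : ℝ → ℝ) (σ : ℝ) : ℝ → ℝ := fun u => (1 / σ) * K (u / σ)

/-- `R(f) = ∫ f(x)² dx`. -/
noncomputable def Rquad (f : ℝ → ℝ) : ℝ := ∫ x : ℝ, (f x) ^ 2

/-- Convolution `(K ⋆ p)(x) = ∫ K(x − y)·p(y) dy`. -/
noncomputable def convKP (K p : ℝ → ℝ) : ℝ → ℝ := fun x => ∫ y : ℝ, K (x - y) * p y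

/-!
For fixed `x`, `ĥ(x)` is a weighted sum of independent bounded variables `K_{σ_i}(x - X^{(i)}_j)`,
so its mean squared error is its variance plus its squared bias. The variance is at most
`∑ α_i² / n_i · E[K_{σ_i}(x - X^{(i)})²] = ∑ α_i² / n_i · (K_{σ_i}² ⋆ p_i)(x)`, and integrating a
convolution gives `∫ K_σ² ⋆ p_i = R(K_σ) = R(K) / σ`. The bias
`∑ α_i (K_{σ_i} ⋆ p_i - p_i)(x) + ∑ α_i b_i(x)` has at most `2T - 1` nonzero terms because
`b_T = 0`, so Cauchy–Schwarz bounds its square by `2T - 1` times the sum of their squares.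
-/

open Finset

section scaledKernel

variable {K : ℝ → ℝ} {σ : ℝ}

lemma measurable_scaledKernel (hK : Measurable K) (σ : ℝ) : Measurable (scaledKernel K σ) := by
  unfold scaledKernel
  fun_prop

lemma abs_scaledKernel_le {C : ℝ} (hC : ∀ x, |K x| ≤ C) (hσ : 0 < σ) (u : ℝ) :
    |scaledKernel K σ u| ≤ C / σ := by
  rw [scaledKernel, abs_mul, abs_of_pos (one_div_pos.2 hσ), one_div_mul_eq_div]
  gcongr
  exact hC _

lemma sq_scaledKernel (K : ℝ → ℝ) (σ : ℝ) :
    (fun x => scaledKernel K σ x ^ 2) = fun x => (1 / σ) ^ 2 * K (x / σ) ^ 2 := by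
  simp only [scaledKernel, mul_pow]

lemma integrable_sq_scaledKernel (hK : Integrable fun x => K x ^ 2) (hσ : σ ≠ 0) :
    Integrable fun x => scaledKernel K σ x ^ 2 := by
  rw [sq_scaledKernel]
  exact (hK.comp_div hσ).const_mul _

lemma Rquad_scaledKernel (hσ : 0 < σ) : Rquad (scaledKernel K σ) = Rquad K / σ := by
  rw [Rquad, sq_scaledKernel, integral_const_mul, Measure.integral_comp_div (fun u => K u ^ 2),
    abs_of_pos hσ, smul_eq_mul, Rquad]
  field_simp

end scaledKernel

lemma integral_comp_eq_integral_mul_of_map_eq_withDensity {Ω α : Type*} [MeasurableSpace Ω]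
    [MeasurableSpace α] {μ : Measure Ω} {ν : Measure α} {X : Ω → α} (hX : Measurable X)
    {p : α → ℝ} (hp : Measurable p) (hp0 : ∀ x, 0 ≤ p x)
    (hd : μ.map X = ν.withDensity fun x => ENNReal.ofReal (p x))
    {f : α → ℝ} (hf : Measurable f) :
    ∫ ω, f (X ω) ∂μ = ∫ y, f y * p y ∂ν := by
  rw [← integral_map hX.aemeasurable hf.aestronglyMeasurable, hd,
    integral_withDensity_eq_integral_toReal_smul hp.ennreal_ofReal
      (ae_of_all _ fun _ => ENNReal.ofReal_lt_top)]
  simp_rw [ENNReal.toReal_ofReal (hp0 _), smul_eq_mul, mul_comm]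

section convolution

variable {G : Type*} [NormedAddCommGroup G] [MeasurableSpace G]

lemma integral_comp_sub_mul_eq_convolution (g p : G → ℝ) (μ : Measure G) :
    (fun x => ∫ y, g (x - y) * p y ∂μ) = convolution p g (ContinuousLinearMap.mul ℝ ℝ) μ := by
  ext x
  simp only [convolution_def, ContinuousLinearMap.mul_apply', mul_comm]

variable [MeasurableAdd₂ G] [MeasurableNeg G] {μ : Measure G} [SFinite μ] [μ.IsAddRightInvariant]
  {g p : G → ℝ}

lemma integrable_integral_comp_sub_mul (hg : Integrable g μ) (hp : Integrable p μ) :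
    Integrable (fun x => ∫ y, g (x - y) * p y ∂μ) μ := by
  rw [integral_comp_sub_mul_eq_convolution]
  exact hp.integrable_convolution _ hg

lemma integral_integral_comp_sub_mul (hg : Integrable g μ) (hp : Integrable p μ) :
    ∫ x, ∫ y, g (x - y) * p y ∂μ ∂μ = (∫ x, g x ∂μ) * ∫ x, p x ∂μ := by
  rw [integral_comp_sub_mul_eq_convolution, integral_convolution _ hp hg,
    ContinuousLinearMap.mul_apply', mul_comm]

end convolution

section variance

variable {Ω : Type*} [MeasurableSpace Ω] {μ : Measure Ω} [IsProbabilityMeasure μ]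

lemma integral_sub_sq_eq_variance_add {X : Ω → ℝ} (hX : MemLp X 2 μ) (d : ℝ) :
    ∫ ω, (X ω - d) ^ 2 ∂μ = variance X μ + (μ[X] - d) ^ 2 := by
  have hXd : MemLp (fun ω => X ω - d) 2 μ := hX.sub (memLp_const d)
  have hmean : μ[fun ω => X ω - d] = μ[X] - d := by
    rw [integral_sub (hX.integrable one_le_two) (integrable_const d), integral_const, probReal_univ,
      one_smul]
  rw [← variance_sub_const hX.aestronglyMeasurable d, variance_eq_sub hXd, hmean]
  simp only [Pi.pow_apply]
  ring

lemma integral_sq_sum_sub_le {ι : Type*} [Fintype ι] {Y : ι → Ω → ℝ} (hY : ∀ q, MemLp (Y q) 2 μ)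
    (hindep : Pairwise fun q q' => IndepFun (Y q) (Y q') μ) (c : ι → ℝ) (d : ℝ) :
    ∫ ω, (∑ q, c q * Y q ω - d) ^ 2 ∂μ
      ≤ ∑ q, c q ^ 2 * ∫ ω, Y q ω ^ 2 ∂μ + (∑ q, c q * μ[Y q] - d) ^ 2 := by
  set W : Ω → ℝ := fun ω => ∑ q, c q * Y q ω
  have hcY : ∀ q, MemLp (fun ω => c q * Y q ω) 2 μ := fun q => (hY q).const_mul (c q)
  have hW : W = ∑ q, fun ω => c q * Y q ω := by
    ext ω; simp [W]
  have hvar : variance W μ = ∑ q, c q ^ 2 * variance (Y q) μ := by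
    rw [hW, IndepFun.variance_sum (fun q _ => hcY q)
      fun q _ q' _ hne => (hindep hne).comp (measurable_const_mul (c q)) (measurable_const_mul (c q'))]
    simp only [variance_const_mul]
  have hmean : μ[W] = ∑ q, c q * μ[Y q] := by
    rw [integral_finsetSum _ fun q _ => (hcY q).integrable one_le_two]
    simp only [integral_const_mul]
  calc ∫ ω, (W ω - d) ^ 2 ∂μ = variance W μ + (μ[W] - d) ^ 2 :=
        integral_sub_sq_eq_variance_add (hW ▸ memLp_finsetSum' _ fun q _ => hcY q) d
    _ ≤ _ := by
      rw [hvar, hmean]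
      gcongr with q
      exact variance_le_expectation_sq (hY q).aestronglyMeasurable

end variance

lemma sq_sum_add_sum_le {ι : Type*} [Fintype ι] {t : ι} (u v : ι → ℝ) (hu : u t = 0) :
    (∑ i, u i + ∑ i, v i) ^ 2
      ≤ (2 * Fintype.card ι - 1) * (∑ i, u i ^ 2 + ∑ i, v i ^ 2) := by
  classical
  -- Cauchy–Schwarz over the `2 * card ι - 1` terms that remain after dropping `u t`.
  have h := sq_sum_le_card_mul_sum_sq (s := (univ.erase t).disjSum univ) (f := Sum.elim u v)
  simp only [sum_disjSum, card_disjSum, card_erase_of_mem (mem_univ t), card_univ, Sum.elim_inl,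
    Sum.elim_inr] at h
  rw [sum_erase _ hu, sum_erase (f := fun i => u i ^ 2) _ (by simp [hu])] at h
  have hcard : 1 ≤ Fintype.card ι := Fintype.card_pos_iff.2 ⟨t⟩
  refine h.trans_eq ?_
  push_cast [hcard]
  ring

lemma sq_weighted_sum_sub_le {ι : Type*} [Fintype ι] (t : ι) {w : ι → ℝ} (hw : ∑ i, w i = 1)
    (a b : ι → ℝ) :
    (∑ i, w i * a i - b t) ^ 2
      ≤ (2 * Fintype.card ι - 1)
        * (∑ i, w i ^ 2 * (b i - b t) ^ 2 + ∑ i, w i ^ 2 * (a i - b i) ^ 2) := by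
  have hsplit : ∑ i, w i * a i - b t = ∑ i, w i * (b i - b t) + ∑ i, w i * (a i - b i) := by
    simp only [mul_sub, sum_sub_distrib, ← sum_mul, hw, one_mul]
    ring
  simpa only [hsplit, mul_pow] using
    sq_sum_add_sum_le (t := t) (fun i => w i * (b i - b t)) (fun i => w i * (a i - b i))
      (by simp)

lemma integral_sq_weighted_batch_mean_sub_le {Ω α ι : Type*} [MeasurableSpace Ω]
    [MeasurableSpace α] {μ : Measure Ω} [IsProbabilityMeasure μ] {ν : Measure α} [Fintype ι]
    {n : ι → ℕ} (hn : ∀ i, 0 < n i) {X : (i : ι) → Fin (n i) → Ω → α}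
    (hX : ∀ i j, Measurable (X i j)) (hindep : iIndepFun (fun q : (i : ι) × Fin (n i) => X q.1 q.2) μ)
    {p : ι → α → ℝ} (hp : ∀ i, Measurable (p i)) (hp0 : ∀ i x, 0 ≤ p i x)
    (hdist : ∀ i j, μ.map (X i j) = ν.withDensity fun x => ENNReal.ofReal (p i x))
    {f : ι → α → ℝ} (hf : ∀ i, Measurable (f i)) (hfb : ∀ i, ∃ C, ∀ y, |f i y| ≤ C)
    (w : ι → ℝ) (d : ℝ) :
    ∫ ω, (∑ i, w i * ((n i : ℝ)⁻¹ * ∑ j, f i (X i j ω)) - d) ^ 2 ∂μ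
      ≤ ∑ i, w i ^ 2 / n i * ∫ y, f i y ^ 2 * p i y ∂ν
        + (∑ i, w i * ∫ y, f i y * p i y ∂ν - d) ^ 2 := by
  set Y : (i : ι) × Fin (n i) → Ω → ℝ := fun q ω => f q.1 (X q.1 q.2 ω)
  set c : (i : ι) × Fin (n i) → ℝ := fun q => w q.1 * (n q.1 : ℝ)⁻¹
  have hY : ∀ q, MemLp (Y q) 2 μ := fun q =>
    let ⟨C, hC⟩ := hfb q.1
    .of_bound ((hf q.1).comp (hX q.1 q.2)).aestronglyMeasurable C (ae_of_all _ fun _ => hC _)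
  have hindepY : Pairwise fun q q' => IndepFun (Y q) (Y q') μ := fun q q' hne =>
    (hindep.indepFun hne).comp (hf q.1) (hf q'.1)
  have hmoment : ∀ q : (i : ι) × Fin (n i), ∀ g : α → ℝ, Measurable g →
      ∫ ω, g (X q.1 q.2 ω) ∂μ = ∫ y, g y * p q.1 y ∂ν := fun q g hg =>
    integral_comp_eq_integral_mul_of_map_eq_withDensity (hX q.1 q.2) (hp q.1) (hp0 q.1)
      (hdist q.1 q.2) hg
  have hest : ∀ ω, ∑ i, w i * ((n i : ℝ)⁻¹ * ∑ j, f i (X i j ω)) = ∑ q, c q * Y q ω := by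
    intro ω
    simp only [Fintype.sum_sigma, c, Y, mul_sum, mul_assoc]
  simp_rw [hest]
  refine (integral_sq_sum_sub_le hY hindepY c d).trans_eq ?_
  simp only [Fintype.sum_sigma, c, Y, hmoment _ _ ((hf _).pow_const 2), hmoment _ _ (hf _),
    sum_const, card_univ, Fintype.card_fin, nsmul_eq_mul]
  have hn' : ∀ i, (n i : ℝ) ≠ 0 := fun i => Nat.cast_ne_zero.2 (hn i).ne'
  congr 1
  · exact sum_congr rfl fun i _ => by field_simp [hn' i]
  · congr 2
    exact sum_congr rfl fun i _ => by field_simp [hn' i]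

lemma integrable_and_integral_sum_mul_integral_sq_scaledKernel_mul {ι : Type*} [Fintype ι]
    {K : ℝ → ℝ} (hK : Integrable fun x => K x ^ 2) {σ : ι → ℝ} (hσ : ∀ i, 0 < σ i)
    {p : ι → ℝ → ℝ} (hp : ∀ i, ∫ x, p i x = 1) (c : ι → ℝ) :
    Integrable (fun x => ∑ i, c i * ∫ y, scaledKernel K (σ i) (x - y) ^ 2 * p i y)
      ∧ ∫ x, ∑ i, c i * ∫ y, scaledKernel K (σ i) (x - y) ^ 2 * p i y
        = ∑ i, c i * (Rquad K / σ i) := by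
  have hpi : ∀ i, Integrable (p i) := fun i => .of_integral_ne_zero (by simp [hp])
  have hint : ∀ i, Integrable fun x => c i * ∫ y, scaledKernel K (σ i) (x - y) ^ 2 * p i y :=
    fun i => (integrable_integral_comp_sub_mul
      (integrable_sq_scaledKernel hK (hσ i).ne') (hpi i)).const_mul _
  refine ⟨integrable_finsetSum _ fun i _ => hint i, ?_⟩
  rw [integral_finsetSum _ fun i _ => hint i]
  refine sum_congr rfl fun i _ => ?_
  rw [integral_const_mul, integral_integral_comp_sub_mul
    (integrable_sq_scaledKernel hK (hσ i).ne') (hpi i), hp, mul_one, ← Rquad_scaledKernel (hσ i),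
    Rquad]

lemma integrable_and_integral_const_mul_sum_mul_sq {ι : Type*} [Fintype ι] {f : ι → ℝ → ℝ}
    (hf : ∀ i, Integrable fun x => f i x ^ 2) (c : ℝ) (a : ι → ℝ) :
    Integrable (fun x => c * ∑ i, a i * f i x ^ 2)
      ∧ ∫ x, c * ∑ i, a i * f i x ^ 2 = c * ∑ i, a i * Rquad (f i) := by
  refine ⟨(integrable_finsetSum _ fun i _ => (hf i).const_mul _).const_mul _, ?_⟩
  rw [integral_const_mul, integral_finsetSum _ fun i _ => (hf i).const_mul _]
  simp only [integral_const_mul, Rquad]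

lemma integral_sq_sliding_window_sub_le {Ω ι : Type*} [MeasurableSpace Ω] {μ : Measure Ω}
    [IsProbabilityMeasure μ] [Fintype ι] {n : ι → ℕ} (hn : ∀ i, 0 < n i)
    {X : (i : ι) → Fin (n i) → Ω → ℝ} (hX : ∀ i j, Measurable (X i j))
    (hindep : iIndepFun (fun q : (i : ι) × Fin (n i) => X q.1 q.2) μ)
    {p : ι → ℝ → ℝ} (hp : ∀ i, Measurable (p i)) (hp0 : ∀ i x, 0 ≤ p i x)
    (hdist : ∀ i j, μ.map (X i j) = volume.withDensity fun x => ENNReal.ofReal (p i x))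
    {k : ι → ℝ → ℝ} (hk : ∀ i, Measurable (k i)) (hkb : ∀ i, ∃ C, ∀ u, |k i u| ≤ C)
    {α : ι → ℝ} (hα : ∑ i, α i = 1) (t : ι) (x : ℝ) :
    ∫ ω, (∑ i, α i * ((n i : ℝ)⁻¹ * ∑ j, k i (x - X i j ω)) - p t x) ^ 2 ∂μ
      ≤ ∑ i, α i ^ 2 / n i * (∫ y, k i (x - y) ^ 2 * p i y)
        + (2 * Fintype.card ι - 1) * ∑ i, α i ^ 2 * (p i x - p t x) ^ 2
        + (2 * Fintype.card ι - 1) * ∑ i, α i ^ 2 * (convKP (k i) (p i) x - p i x) ^ 2 := by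
  refine (integral_sq_weighted_batch_mean_sub_le hn hX hindep hp hp0 hdist
    (f := fun i y => k i (x - y)) (fun i => (hk i).comp (measurable_const.sub measurable_id))
    (fun i => (hkb i).imp fun C hC y => hC _) α (p t x)).trans ?_
  rw [add_assoc, ← mul_add]
  gcongr
  exact sq_weighted_sum_sub_le t hα (fun i => convKP (k i) (p i) x) (fun i => p i x)

theorem sliding_window_mise_upper_bound_general
    {Ω : Type*} [MeasurableSpace Ω] (μ : Measure Ω) [IsProbabilityMeasure μ]
    (T : ℕ) (hT : 0 < T)
    (nb : Fin T → ℕ) (hnb : ∀ i, 0 < nb i)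
    (p : Fin T → ℝ → ℝ) (hpmeas : ∀ i, Measurable (p i))
    (X : (i : Fin T) → Fin (nb i) → Ω → ℝ)
    (hXmeas : ∀ i j, Measurable (X i j))
    -- all the samples (within batches and across batches) are mutually independent
    (hindep : iIndepFun
      (fun q : (i : Fin T) × Fin (nb i) => X q.1 q.2) μ)
    -- each sample of batch `i` has density `p i` with respect to Lebesgue measure
    (hdist : ∀ i j, Measure.map (X i j) μ
      = volume.withDensity (fun x => ENNReal.ofReal (p i x)))
    (hppos : ∀ i x, 0 ≤ p i x) (hpint : ∀ i, ∫ x : ℝ, p i x = 1)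
    -- the kernel: bounded, measurable, integrable and square-integrable
    (K : ℝ → ℝ) (hKmeas : Measurable K) (hKbdd : ∃ C, ∀ x, |K x| ≤ C)
    (hKsq : Integrable (fun x => (K x) ^ 2))
    -- bandwidths and weights
    (σ : Fin T → ℝ) (hσ : ∀ i, 0 < σ i)
    (α : Fin T → ℝ) (hαsum : ∑ i, α i = 1)
    -- square integrability assumptions
    (hconvsq : ∀ i, Integrable
      (fun x => (convKP (scaledKernel K (σ i)) (p i) x - p i x) ^ 2))
    (hbsq : ∀ i, Integrable
      (fun x => (p i x - p (⟨T - 1, Nat.sub_lt hT Nat.one_pos⟩ : Fin T) x) ^ 2))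
    -- the sliding-window kernel density estimator
    (hhat : ℝ → Ω → ℝ)
    (hhat_def : ∀ x ω, hhat x ω
      = ∑ i, α i * ((nb i : ℝ)⁻¹ * ∑ j, scaledKernel K (σ i) (x - X i j ω))) :
    (∫ x : ℝ, ∫ ω, (hhat x ω - p (⟨T - 1, Nat.sub_lt hT Nat.one_pos⟩ : Fin T) x) ^ 2 ∂μ)
      ≤ (∑ i, (α i) ^ 2 * Rquad K / ((nb i : ℝ) * σ i))
        + (2 * (T : ℝ) - 1) * ∑ i, (α i) ^ 2
            * Rquad (fun x => p i x - p (⟨T - 1, Nat.sub_lt hT Nat.one_pos⟩ : Fin T) x)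
        + (2 * (T : ℝ) - 1) * ∑ i, (α i) ^ 2
            * Rquad (fun x => convKP (scaledKernel K (σ i)) (p i) x - p i x) := by
  obtain ⟨C, hC⟩ := hKbdd
  set t : Fin T := ⟨T - 1, Nat.sub_lt hT Nat.one_pos⟩
  obtain ⟨hVint, hV⟩ := integrable_and_integral_sum_mul_integral_sq_scaledKernel_mul hKsq hσ hpint
    fun i => α i ^ 2 / nb i
  obtain ⟨hBint, hB⟩ :=
    integrable_and_integral_const_mul_sum_mul_sq hbsq (2 * T - 1) fun i => α i ^ 2
  obtain ⟨hDint, hD⟩ :=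
    integrable_and_integral_const_mul_sum_mul_sq hconvsq (2 * T - 1) fun i => α i ^ 2
  set V : ℝ → ℝ := fun x =>
    ∑ i, α i ^ 2 / nb i * ∫ y, scaledKernel K (σ i) (x - y) ^ 2 * p i y
  set B : ℝ → ℝ := fun x => (2 * T - 1) * ∑ i, α i ^ 2 * (p i x - p t x) ^ 2
  set D : ℝ → ℝ := fun x =>
    (2 * T - 1) * ∑ i, α i ^ 2 * (convKP (scaledKernel K (σ i)) (p i) x - p i x) ^ 2
  have hpoint : ∀ x, ∫ ω, (hhat x ω - p t x) ^ 2 ∂μ ≤ V x + B x + D x := fun x => by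
    simpa only [hhat_def, Fintype.card_fin] using
      integral_sq_sliding_window_sub_le hnb hXmeas hindep hpmeas hppos hdist
        (fun i => measurable_scaledKernel hKmeas _)
        (fun i => ⟨C / σ i, abs_scaledKernel_le hC (hσ i)⟩) hαsum t x
  calc _ ≤ ∫ x, (V x + B x + D x) :=
        integral_mono_of_nonneg (ae_of_all _ fun x => integral_nonneg fun _ => sq_nonneg _)
          ((hVint.add hBint).add hDint) (ae_of_all _ hpoint)
    _ = _ := by
      rw [integral_add (f := fun x => V x + B x) (hVint.add hBint) hDint,
        integral_add hVint hBint, hV, hB, hD]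
      simp only [div_mul_div_comm]

/-- **Finite-sample MISE bound for the sliding-window kernel density estimator**
(the non-asymptotic inequality underlying Theorem 1 of the paper). -/
theorem sliding_window_mise_upper_bound
    {Ω : Type*} [MeasurableSpace Ω] (μ : Measure Ω) [IsProbabilityMeasure μ]
    (T : ℕ) (hT : 0 < T)
    (nb : Fin T → ℕ) (hnb : ∀ i, 0 < nb i)
    (p : Fin T → ℝ → ℝ) (hpmeas : ∀ i, Measurable (p i))
    (X : (i : Fin T) → Fin (nb i) → Ω → ℝ)
    (hXmeas : ∀ i j, Measurable (X i j))
    -- all the samples (within batches and across batches) are mutually independent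
    (hindep : iIndepFun
      (fun q : (i : Fin T) × Fin (nb i) => X q.1 q.2) μ)
    -- each sample of batch `i` has density `p i` with respect to Lebesgue measure
    (hdist : ∀ i j, Measure.map (X i j) μ
      = volume.withDensity (fun x => ENNReal.ofReal (p i x)))
    (hppos : ∀ i x, 0 ≤ p i x) (hpint : ∀ i, ∫ x : ℝ, p i x = 1)
    -- the kernel: bounded, measurable, integrable and square-integrable
    (K : ℝ → ℝ) (hKmeas : Measurable K) (hKbdd : ∃ C, ∀ x, |K x| ≤ C)
    (hKint : Integrable K) (hKsq : Integrable (fun x => (K x) ^ 2))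
    -- bandwidths and weights
    (σ : Fin T → ℝ) (hσ : ∀ i, 0 < σ i)
    (α : Fin T → ℝ) (hα : ∀ i, 0 ≤ α i) (hαsum : ∑ i, α i = 1)
    -- square integrability assumptions
    (hpsq : ∀ i, Integrable (fun x => (p i x) ^ 2))
    (hconvsq : ∀ i, Integrable
      (fun x => (convKP (scaledKernel K (σ i)) (p i) x - p i x) ^ 2))
    (hbsq : ∀ i, Integrable
      (fun x => (p i x - p (⟨T - 1, Nat.sub_lt hT Nat.one_pos⟩ : Fin T) x) ^ 2))
    -- the sliding-window kernel density estimator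
    (hhat : ℝ → Ω → ℝ)
    (hhat_def : ∀ x ω, hhat x ω
      = ∑ i, α i * ((nb i : ℝ)⁻¹ * ∑ j, scaledKernel K (σ i) (x - X i j ω))) :
    (∫ x : ℝ, ∫ ω, (hhat x ω - p (⟨T - 1, Nat.sub_lt hT Nat.one_pos⟩ : Fin T) x) ^ 2 ∂μ)
      ≤ (∑ i, (α i) ^ 2 * Rquad K / ((nb i : ℝ) * σ i))
        + (2 * (T : ℝ) - 1) * ∑ i, (α i) ^ 2
            * Rquad (fun x => p i x - p (⟨T - 1, Nat.sub_lt hT Nat.one_pos⟩ : Fin T) x)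
        + (2 * (T : ℝ) - 1) * ∑ i, (α i) ^ 2
            * Rquad (fun x => convKP (scaledKernel K (σ i)) (p i) x - p i x) :=
  sliding_window_mise_upper_bound_general μ T hT nb hnb p hpmeas X hXmeas hindep hdist hppos hpint K
    hKmeas hKbdd hKsq σ hσ α hαsum hconvsq hbsq hhat hhat_def
end

section
/- Let K : ℝ → ℝ be bounded and measurable with R(K) = ∫_ℝ K(z)² dz < ∞, and let p : ℝ → ℝ be a bounded probability density that is continuous at the point x ∈ ℝ. Then lim_{σ → 0⁺} σ·∫_ℝ K_σ(x − y)²·p(y) dy = R(K)·p(x). -/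
open MeasureTheory Filter Real Topology

/-! Substituting `y = x - σ z` turns `σ ∫ K_σ(x - y)² p(y) dy` into `∫ K(z)² p(x - σ z) dz`;
as `σ → 0` the integrand tends to `K(z)² p(x)` and is dominated by `(sup p)·K(z)²`. -/

lemma mul_scaledKernel_sq (K : ℝ → ℝ) {σ : ℝ} (hσ : σ ≠ 0) (u : ℝ) :
    σ * scaledKernel K σ u ^ 2 = scaledKernel (fun z => K z ^ 2) σ u := by
  simp only [scaledKernel]
  field_simp

lemma integral_scaledKernel_mul_eq (K f : ℝ → ℝ) (x : ℝ) {σ : ℝ} (hσ : 0 < σ) :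
    ∫ y, scaledKernel K σ (x - y) * f y = ∫ z, K z * f (x - σ * z) := by
  set g : ℝ → ℝ := fun y => K ((x - y) / σ) * f y
  have hg : ∀ z, K z * f (x - σ * z) = g (x - σ * z) := fun z => by
    simp only [g, sub_sub_cancel, mul_div_cancel_left₀ z hσ.ne']
  calc ∫ y, scaledKernel K σ (x - y) * f y = σ⁻¹ * ∫ y, g y := by
        rw [← integral_const_mul]
        simp only [scaledKernel, g, one_div, mul_assoc]
    _ = |σ⁻¹| * ∫ t, g (x - t) := by
        rw [abs_of_pos (inv_pos.mpr hσ), integral_sub_left_eq_self]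
    _ = ∫ z, K z * f (x - σ * z) := by
        simp_rw [hg]
        exact (Measure.integral_comp_mul_left (fun t => g (x - t)) σ).symm

theorem tendsto_integral_mul_comp_sub_mul_nhds_zero (g f : ℝ → ℝ) (hg : Integrable g)
    (hf : Measurable f) {C : ℝ} (hfC : ∀ y, |f y| ≤ C) {x : ℝ} (hfx : ContinuousAt f x) :
    Tendsto (fun σ => ∫ z, g z * f (x - σ * z)) (𝓝 0) (𝓝 ((∫ z, g z) * f x)) := by
  rw [← integral_mul_const]
  refine tendsto_integral_filter_of_dominated_convergence (fun z => ‖g z‖ * C) ?_ ?_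
    (hg.norm.mul_const C) ?_
  · exact .of_forall fun σ => hg.aestronglyMeasurable.mul
      (hf.comp (measurable_const.sub (measurable_const.mul measurable_id))).aestronglyMeasurable
  · exact .of_forall fun σ => .of_forall fun z => by
      rw [norm_mul, Real.norm_eq_abs (f _)]
      exact mul_le_mul_of_nonneg_left (hfC _) (norm_nonneg _)
  · refine .of_forall fun z => tendsto_const_nhds.mul (hfx.tendsto.comp ?_)
    simpa using (tendsto_const_nhds (x := x)).sub ((tendsto_id (x := 𝓝 (0 : ℝ))).mul_const z)

theorem scaledKernel_sq_convolution_asymptotic_general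
    (K : ℝ → ℝ)
    (hKsq : Integrable (fun x => (K x) ^ 2))
    (p : ℝ → ℝ) (hpmeas : Measurable p) (hppos : ∀ x, 0 ≤ p x)
    (hpbdd : ∃ C, ∀ x, p x ≤ C)
    (x : ℝ) (hpcont : ContinuousAt p x) :
    Tendsto (fun σ : ℝ => σ * ∫ y : ℝ, (scaledKernel K σ (x - y)) ^ 2 * p y)
      (𝓝[>] 0) (𝓝 (Rquad K * p x)) := by
  obtain ⟨C, hC⟩ := hpbdd
  have hpC : ∀ y, |p y| ≤ C := fun y => (abs_of_nonneg (hppos y)).trans_le (hC y)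
  have hsubst : ∀ σ > 0, σ * ∫ y, scaledKernel K σ (x - y) ^ 2 * p y
      = ∫ z, K z ^ 2 * p (x - σ * z) := fun σ hσ => by
    simp_rw [← integral_const_mul, ← mul_assoc, mul_scaledKernel_sq K hσ.ne']
    exact integral_scaledKernel_mul_eq _ p x hσ
  refine ((tendsto_integral_mul_comp_sub_mul_nhds_zero _ p hKsq hpmeas hpC hpcont).mono_left
    nhdsWithin_le_nhds).congr' ?_
  filter_upwards [self_mem_nhdsWithin] with σ hσ
  exact (hsubst σ hσ).symm

/-- **Asymptotics of the variance kernel term**: for a bounded measurable kernel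
with `R(K) < ∞` and a bounded probability density `p` continuous at `x`,
`σ·∫ K_σ(x−y)²·p(y) dy → R(K)·p(x)` as `σ → 0⁺`. -/
theorem scaledKernel_sq_convolution_asymptotic
    (K : ℝ → ℝ) (hKmeas : Measurable K) (hKbdd : ∃ C, ∀ x, |K x| ≤ C)
    (hKsq : Integrable (fun x => (K x) ^ 2))
    (p : ℝ → ℝ) (hpmeas : Measurable p) (hppos : ∀ x, 0 ≤ p x)
    (hpint : ∫ x : ℝ, p x = 1) (hpbdd : ∃ C, ∀ x, p x ≤ C)
    (x : ℝ) (hpcont : ContinuousAt p x) :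
    Tendsto (fun σ : ℝ => σ * ∫ y : ℝ, (scaledKernel K σ (x - y)) ^ 2 * p y)
      (𝓝[>] 0) (𝓝 (Rquad K * p x)) :=
  scaledKernel_sq_convolution_asymptotic_general K hKsq p hpmeas hppos hpbdd x hpcont
end

section
/- Let K : ℝ → ℝ be a probability density (K ≥ 0, ∫_ℝ K = 1) with vanishing first moment ∫_ℝ z·K(z) dz = 0 and finite second moment μ₂(K) = ∫_ℝ z²·K(z) dz < ∞, and let p : ℝ → ℝ be twice differentiable with p'' continuous and bounded on ℝ. Then for every x ∈ ℝ, lim_{σ → 0⁺} [ (K_σ * p)(x) − p(x) ] / σ² = (1/2)·μ₂(K)·p''(x), where (K_σ * p)(x) = ∫_ℝ K_σ(x − y)·p(y) dy. -/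
/-!
Taylor's formula with integral remainder,
`p (x + h) = p x + h p' x + h² R(h)` with `R(h) = ∫₀¹ (1 - t) p''(x + t h) dt`,
is substituted into `(K_σ ⋆ p)(x) = ∫ K(z) p(x - σ z) dz`. The zeroth and first moments of `K`
turn the first two terms into `p x` and `0`, leaving `σ² ∫ R(-σ z) z² K(z) dz`. Since `R` is
continuous and bounded with `R(0) = p''(x) / 2`, dominated convergence against the integrable
`z² K(z)` gives the limit.
-/

open MeasureTheory Filter Real Topology

noncomputable def secondOrderRemainder (f : ℝ → ℝ) (x h : ℝ) : ℝ :=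
  ∫ t in (0 : ℝ)..1, (1 - t) * f (x + t * h)

section secondOrderRemainder

variable {f : ℝ → ℝ}

theorem taylor_secondOrderRemainder {p p' : ℝ → ℝ} (hp' : ∀ y, HasDerivAt p (p' y) y)
    (hf : ∀ y, HasDerivAt p' (f y) y) (hf_cont : Continuous f) (x h : ℝ) :
    p (x + h) = p x + h * p' x + h ^ 2 * secondOrderRemainder f x h := by
  -- `g t` is the first-order Taylor polynomial of `p` at `x + t h`, evaluated at `x + h`;
  -- its derivative telescopes to the remainder integrand.
  set g : ℝ → ℝ := fun t => p (x + t * h) + (1 - t) * h * p' (x + t * h)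
  have hline (t : ℝ) : HasDerivAt (fun t : ℝ => x + t * h) h t := by
    simpa using ((hasDerivAt_id t).mul_const h).const_add x
  have hg (t : ℝ) : HasDerivAt g (h ^ 2 * ((1 - t) * f (x + t * h))) t := by
    have := ((hp' _).comp t (hline t)).add
      ((((hasDerivAt_id t).const_sub 1).mul_const h).mul ((hf _).comp t (hline t)))
    refine this.congr_deriv ?_
    simp only [Function.comp_apply, id]
    ring
  have hftc := intervalIntegral.integral_eq_sub_of_hasDerivAt (a := 0) (b := 1) (fun t _ => hg t)
    (by apply Continuous.intervalIntegrable; fun_prop)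
  rw [intervalIntegral.integral_const_mul] at hftc
  simp [secondOrderRemainder, hftc, g]

theorem continuous_secondOrderRemainder (hf : Continuous f) (x : ℝ) :
    Continuous (secondOrderRemainder f x) :=
  intervalIntegral.continuous_parametric_intervalIntegral_of_continuous' (by fun_prop) 0 1

theorem secondOrderRemainder_zero (x : ℝ) : secondOrderRemainder f x 0 = f x / 2 := by
  norm_num [secondOrderRemainder, intervalIntegral.integral_mul_const,
    intervalIntegral.integral_comp_sub_left fun t => t, one_div_mul_eq_div]

theorem abs_secondOrderRemainder_le {C : ℝ} (hC : ∀ y, |f y| ≤ C) (x h : ℝ) :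
    |secondOrderRemainder f x h| ≤ C := by
  have hbound : ∀ t ∈ Set.uIoc (0 : ℝ) 1, ‖(1 - t) * f (x + t * h)‖ ≤ C := by
    intro t ht
    rw [Set.uIoc_of_le zero_le_one] at ht
    rw [norm_mul, Real.norm_eq_abs, Real.norm_eq_abs, abs_of_nonneg (by linarith [ht.2])]
    exact (mul_le_of_le_one_left (abs_nonneg _) (by linarith [ht.1])).trans (hC _)
  simpa [secondOrderRemainder] using intervalIntegral.norm_integral_le_of_norm_le_const hbound

end secondOrderRemainder

theorem integral_scaledKernel_mul (K g : ℝ → ℝ) {σ : ℝ} (hσ : 0 < σ) (x : ℝ) :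
    ∫ y, scaledKernel K σ (x - y) * g y = ∫ z, K z * g (x - σ * z) := by
  have hcv := Measure.integral_comp_mul_left (fun u => K (u / σ) * g (x - u)) σ
  simp only [mul_div_cancel_left₀ _ hσ.ne', abs_of_pos (inv_pos.mpr hσ), smul_eq_mul] at hcv
  rw [hcv, ← integral_sub_left_eq_self _ volume x, ← integral_const_mul]
  simp only [scaledKernel, sub_sub_cancel]
  congr 1 with y
  ring

theorem tendsto_integral_comp_mul_mul {g w : ℝ → ℝ} (hg : Continuous g) {C : ℝ}
    (hC : ∀ h, |g h| ≤ C) (hw : Integrable w) :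
    Tendsto (fun σ => ∫ z, g (σ * z) * w z) (𝓝 0) (𝓝 (g 0 * ∫ z, w z)) := by
  rw [← integral_const_mul]
  refine tendsto_integral_filter_of_dominated_convergence (fun z => C * ‖w z‖)
    (Eventually.of_forall fun σ => ?_) (Eventually.of_forall fun σ => ?_)
    (hw.norm.const_mul C) (ae_of_all _ fun z => ?_)
  · exact ((hg.comp (continuous_const_mul σ)).aestronglyMeasurable).mul hw.aestronglyMeasurable
  · exact ae_of_all _ fun z => by
      rw [norm_mul]
      exact mul_le_mul_of_nonneg_right (hC _) (norm_nonneg _)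
  · have : Tendsto (fun σ : ℝ => σ * z) (𝓝 0) (𝓝 0) := by
      simpa using (continuous_mul_const z).tendsto 0
    exact ((hg.tendsto 0).comp this).mul_const (w z)

theorem integral_mul_comp_sub_eq_moments {K p p' f : ℝ → ℝ} (hK : Integrable K)
    (hK₁ : Integrable fun z => z * K z) (hK₂ : Integrable fun z => z ^ 2 * K z)
    (hp' : ∀ y, HasDerivAt p (p' y) y) (hf : ∀ y, HasDerivAt p' (f y) y)
    (hf_cont : Continuous f) {C : ℝ} (hC : ∀ y, |f y| ≤ C) (x σ : ℝ) :
    ∫ z, K z * p (x - σ * z) = (∫ z, K z) * p x - σ * p' x * (∫ z, z * K z)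
      + σ ^ 2 * ∫ z, secondOrderRemainder f x (-(σ * z)) * (z ^ 2 * K z) := by
  have hR : Integrable fun z => secondOrderRemainder f x (-(σ * z)) * (z ^ 2 * K z) :=
    hK₂.bdd_mul
      ((continuous_secondOrderRemainder hf_cont x).comp (by fun_prop)).aestronglyMeasurable
      (ae_of_all _ fun z => abs_secondOrderRemainder_le hC x _)
  have htaylor (z : ℝ) : K z * p (x - σ * z) = K z * p x - σ * p' x * (z * K z)
      + σ ^ 2 * (secondOrderRemainder f x (-(σ * z)) * (z ^ 2 * K z)) := by
    rw [sub_eq_add_neg x, taylor_secondOrderRemainder hp' hf hf_cont]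
    ring
  simp only [htaylor]
  have hK' : Integrable fun z => K z * p x := hK.mul_const _
  have hK₁' : Integrable fun z => σ * p' x * (z * K z) := hK₁.const_mul _
  rw [integral_add (f := fun z => K z * p x - σ * p' x * (z * K z)) (hK'.sub hK₁')
    (hR.const_mul _), integral_sub hK' hK₁', integral_mul_const, integral_const_mul,
    integral_const_mul]

theorem smoothed_density_taylor_expansion_general
    (K : ℝ → ℝ)
    (hKint : Integrable K) (hKone : ∫ z : ℝ, K z = 1)
    (hKmom1_int : Integrable (fun z => z * K z))
    (hKmom1 : ∫ z : ℝ, z * K z = 0)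
    (hKmom2_int : Integrable (fun z => z ^ 2 * K z))
    (p p' p'' : ℝ → ℝ)
    (hp' : ∀ y, HasDerivAt p (p' y) y)
    (hp'' : ∀ y, HasDerivAt p' (p'' y) y)
    (hp''cont : Continuous p'') (hp''bdd : ∃ C, ∀ y, |p'' y| ≤ C)
    (x : ℝ) :
    Tendsto
      (fun σ : ℝ =>
        ((∫ y : ℝ, scaledKernel K σ (x - y) * p y) - p x) / σ ^ 2)
      (𝓝[>] 0)
      (𝓝 ((1 / 2) * (∫ z : ℝ, z ^ 2 * K z) * p'' x)) := by
  obtain ⟨C, hC⟩ := hp''bdd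
  have hlim := tendsto_integral_comp_mul_mul (g := fun h => secondOrderRemainder p'' x (-h))
    ((continuous_secondOrderRemainder hp''cont x).comp continuous_neg)
    (fun h => abs_secondOrderRemainder_le hC x _) hKmom2_int
  convert (hlim.mono_left nhdsWithin_le_nhds).congr' ?_ using 2
  · rw [neg_zero, secondOrderRemainder_zero]
    ring
  filter_upwards [self_mem_nhdsWithin] with σ (hσ : 0 < σ)
  rw [integral_scaledKernel_mul K p hσ,
    integral_mul_comp_sub_eq_moments hKint hKmom1_int hKmom2_int hp' hp'' hp''cont hC x σ,
    hKone, hKmom1]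
  field_simp
  ring

/-- **Second-order Taylor expansion of the smoothed density**: for a kernel `K`
that is a probability density with vanishing first moment and finite second
moment `μ₂(K)`, and `p` twice differentiable with `p''` continuous and bounded,
`[(K_σ ⋆ p)(x) − p(x)]/σ² → (1/2)·μ₂(K)·p''(x)` as `σ → 0⁺`. -/
theorem smoothed_density_taylor_expansion
    (K : ℝ → ℝ) (hKmeas : Measurable K) (hKpos : ∀ z, 0 ≤ K z)
    (hKint : Integrable K) (hKone : ∫ z : ℝ, K z = 1)
    (hKmom1_int : Integrable (fun z => z * K z))
    (hKmom1 : ∫ z : ℝ, z * K z = 0)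
    (hKmom2_int : Integrable (fun z => z ^ 2 * K z))
    (p p' p'' : ℝ → ℝ)
    (hp' : ∀ y, HasDerivAt p (p' y) y)
    (hp'' : ∀ y, HasDerivAt p' (p'' y) y)
    (hp''cont : Continuous p'') (hp''bdd : ∃ C, ∀ y, |p'' y| ≤ C)
    (x : ℝ) :
    Tendsto
      (fun σ : ℝ =>
        ((∫ y : ℝ, scaledKernel K σ (x - y) * p y) - p x) / σ ^ 2)
      (𝓝[>] 0)
      (𝓝 ((1 / 2) * (∫ z : ℝ, z ^ 2 * K z) * p'' x)) :=
  smoothed_density_taylor_expansion_general K hKint hKone hKmom1_int hKmom1 hKmom2_int p p' p'' hp'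
    hp'' hp''cont hp''bdd x
end
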